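/- Let f : MCG → SL(2,ℤ) be a surjective group homomorphism and let d, d' : ℤ² → ℤ be ℤ-linear maps such that for every Φ ∈ MCG and v ∈ ℤ², d'(f(Φ)·v) is defined via the matrix action. Then the following are equivalent: (1) there exists Φ ∈ MCG with d(e₁) = d'(f(Φ)·e₁) and d(e₂) = d'(f(Φ)·e₂); (2) gcd(d(e₁), d(e₂)) = gcd(d'(e₁), d'(e₂)). -/

import Mathlib

/-!
Writing `r d = (d e₁, d e₂)` for the row of values of a linear form, `d' ∘ M` has value row
`r d' · M`; since `f` is onto, (1) says that `r d` and `r d'` lie in one orbit of `SL(2, ℤ)`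
acting on row vectors. The gcd of the entries is invariant, because it divides every entry of
`r · M` and `M` is invertible; conversely every `r` lies in the orbit of `(0, gcd r)`, since
the primitive vector `r / gcd r` is the bottom row of some matrix in `SL(2, ℤ)`.
-/

open Matrix

open scoped MatrixGroups

theorem LinearMap.apply_mulVec_single_one {R n : Type*} [CommRing R] [Fintype n] [DecidableEq n]
    (d : (n → R) →ₗ[R] R) (M : Matrix n n R) (j : n) :
    d (M *ᵥ Pi.single j 1) = ((fun i => d (Pi.single i 1)) ᵥ* M) j := by
  rw [mulVec_single_one, d.pi_apply_eq_sum_univ, vecMul, dotProduct]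
  refine Finset.sum_congr rfl fun i _ => ?_
  have hsingle : (fun k => if i = k then (1 : R) else 0) = Pi.single i 1 := by
    ext k; simp [Pi.single_apply, eq_comm]
  rw [hsingle, smul_eq_mul, mul_comm, col_apply]

theorem Int.gcd_dvd_gcd_vecMul (r : Fin 2 → ℤ) (M : Matrix (Fin 2) (Fin 2) ℤ) :
    Int.gcd (r 0) (r 1) ∣ Int.gcd ((r ᵥ* M) 0) ((r ᵥ* M) 1) := by
  have hdvd : ∀ j, (Int.gcd (r 0) (r 1) : ℤ) ∣ (r ᵥ* M) j := fun j => by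
    rw [vecMul, vec2_dotProduct]
    exact dvd_add ((Int.gcd_dvd_left _ _).mul_right _)
      ((Int.gcd_dvd_right _ _).mul_right _)
  exact Int.dvd_gcd (hdvd 0) (hdvd 1)

theorem Int.gcd_vecMul_of_isUnit (r : Fin 2 → ℤ) {M : Matrix (Fin 2) (Fin 2) ℤ}
    (hM : IsUnit M) :
    Int.gcd ((r ᵥ* M) 0) ((r ᵥ* M) 1) = Int.gcd (r 0) (r 1) := by
  obtain ⟨u, rfl⟩ := hM
  refine Nat.dvd_antisymm ?_ (Int.gcd_dvd_gcd_vecMul r u)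
  have hr : r ᵥ* u.val ᵥ* u.inv = r := by rw [vecMul_vecMul, u.val_inv, vecMul_one]
  simpa only [hr] using Int.gcd_dvd_gcd_vecMul (r ᵥ* u.val) u.inv

theorem Int.exists_gcd_vecMul_SL_eq (r : Fin 2 → ℤ) :
    ∃ A : SL(2, ℤ), ![0, (Int.gcd (r 0) (r 1) : ℤ)] ᵥ* A = r := by
  set g := Int.gcd (r 0) (r 1)
  rcases Nat.eq_zero_or_pos g with hg | hg
  · obtain ⟨h0, h1⟩ := Int.gcd_eq_zero_iff.mp hg
    refine ⟨1, ?_⟩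
    ext i; fin_cases i <;> simp [hg, h0, h1]
  · have hcop : IsCoprime (r 0 / g) (r 1 / g) :=
      Int.isCoprime_iff_gcd_eq_one.mpr (Int.gcd_div_gcd_div_gcd hg)
    obtain ⟨A, -, hA⟩ := ModularGroup.bottom_row_surj (R := ℤ) (a := fun i => r i / g) hcop
    refine ⟨A, ?_⟩
    have hdvd : ∀ i, (g : ℤ) ∣ r i := by
      intro i; fin_cases i
      exacts [Int.gcd_dvd_left _ _, Int.gcd_dvd_right _ _]
    ext i
    have hsingle : (![0, (g : ℤ)] : Fin 2 → ℤ) = Pi.single 1 (g : ℤ) := by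
      ext j; fin_cases j <;> rfl
    simp only [hsingle, single_vecMul, hA, Pi.smul_apply, row, smul_eq_mul]
    exact Int.mul_ediv_cancel' (hdvd i)

theorem Int.exists_eq_vecMul_SL_iff_gcd_eq (r s : Fin 2 → ℤ) :
    (∃ A : SL(2, ℤ), s = r ᵥ* ↑A) ↔
      Int.gcd (s 0) (s 1) = Int.gcd (r 0) (r 1) := by
  constructor
  · rintro ⟨A, rfl⟩
    exact Int.gcd_vecMul_of_isUnit r
      ((Group.isUnit A).map Matrix.SpecialLinearGroup.coeMonoidHom)
  · intro hgcd
    obtain ⟨B, hB⟩ := Int.exists_gcd_vecMul_SL_eq r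
    obtain ⟨C, hC⟩ := Int.exists_gcd_vecMul_SL_eq s
    refine ⟨B⁻¹ * C, ?_⟩
    calc s = ![0, (Int.gcd (s 0) (s 1) : ℤ)] ᵥ* C := hC.symm
      _ = ![0, (Int.gcd (r 0) (r 1) : ℤ)] ᵥ* ((B * (B⁻¹ * C) : SL(2, ℤ)) : Matrix _ _ ℤ) := by
        rw [hgcd, mul_inv_cancel_left]
      _ = r ᵥ* ((B⁻¹ * C : SL(2, ℤ)) : Matrix _ _ ℤ) := by
        rw [Matrix.SpecialLinearGroup.coe_mul B, ← vecMul_vecMul, hB]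

/-- Given a surjection f : MCG → SL(2,ℤ) and linear maps d, d' : ℤ² → ℤ, there is
Φ ∈ MCG matching d with d' ∘ f(Φ) on the standard basis iff the gcds of the values
of d and d' on the standard basis agree. -/
theorem derived_equivalence_criterion {MCG : Type*} [Group MCG]
    (f : MCG →* Matrix.SpecialLinearGroup (Fin 2) ℤ) (hf : Function.Surjective f)
    (d d' : (Fin 2 → ℤ) →ₗ[ℤ] ℤ) :
    (∃ Φ : MCG, d ![1, 0] = d' ((f Φ : Matrix (Fin 2) (Fin 2) ℤ).mulVec ![1, 0]) ∧
        d ![0, 1] = d' ((f Φ : Matrix (Fin 2) (Fin 2) ℤ).mulVec ![0, 1])) ↔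
      Int.gcd (d ![1, 0]) (d ![0, 1]) = Int.gcd (d' ![1, 0]) (d' ![0, 1]) := by
  have e₁ : (![1, 0] : Fin 2 → ℤ) = Pi.single 0 1 := by ext i; fin_cases i <;> rfl
  have e₂ : (![0, 1] : Fin 2 → ℤ) = Pi.single 1 1 := by ext i; fin_cases i <;> rfl
  let values : ((Fin 2 → ℤ) →ₗ[ℤ] ℤ) → Fin 2 → ℤ := fun δ i => δ (Pi.single i 1)
  have hmatch : ∀ A : SL(2, ℤ),
      (d (Pi.single 0 1) = d' ((A : Matrix (Fin 2) (Fin 2) ℤ) *ᵥ Pi.single 0 1) ∧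
        d (Pi.single 1 1) = d' ((A : Matrix (Fin 2) (Fin 2) ℤ) *ᵥ Pi.single 1 1)) ↔
      values d = values d' ᵥ* (A : Matrix (Fin 2) (Fin 2) ℤ) := by
    intro A
    simp only [funext_iff, Fin.forall_fin_two, d'.apply_mulVec_single_one, values]
  rw [e₁, e₂]
  simp only [hmatch]
  exact hf.exists.symm.trans <| Int.exists_eq_vecMul_SL_iff_gcd_eq (values d') (values d)
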